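/- For all set compositions P ∈ Comp_p and Q ∈ Comp_q, the difference P ∗̂ Q − P ∗̄ Q lies in the ℤ-span of the set compositions U ∈ Comp_{p+q} satisfying P ∗̄ Q ≪ U; in other words, P ∗̂ Q equals P ∗̄ Q plus a ℤ-linear combination of set compositions strictly greater than P ∗̄ Q in the order ≪. -/

import Mathlib

set_option linter.unreachableTactic false
set_option linter.unusedTactic false
set_option maxHeartbeats 1000000


open Finset

/-- Candidate set compositions: lists of finite sets of positive naturals. -/
abbrev SC : Type := List (Finset ℕ)

/-- The underlying (ground) set of a list of blocks. -/
def ground (L : SC) : Finset ℕ := L.foldr (· ∪ ·) ∅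

/-- `L` is a set composition of `[n] = {1,…,n}`. -/
def IsSetComp (n : ℕ) (L : SC) : Prop :=
  (∀ B ∈ L, B.Nonempty) ∧ L.Pairwise Disjoint ∧ ground L = Finset.Icc 1 n

/-- The degree of a set composition (largest element of its ground set). -/
def maxG (L : SC) : ℕ := (ground L).sup id

/-- The 1-based rank of `x` inside the finite set `A` (the position of `x` in the
increasing enumeration of `A`, when `x ∈ A`); this is the order preserving
relabelling `A → [|A|]`. -/
def rankIn (A : Finset ℕ) (x : ℕ) : ℕ := (A.filter (· ≤ x)).card

/-- `P|_A` : intersect the blocks with `A`, delete the empty intersections, and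
relabel along the order preserving bijection `A → [|A|]`. -/
def restrictSC (A : Finset ℕ) (L : SC) : SC :=
  (L.map fun B => (B ∩ A).image (rankIn A)).filter fun B => decide B.Nonempty

/-- Shift all entries of all blocks by `p`. -/
def shiftSC (p : ℕ) (L : SC) : SC := L.map (Finset.image (· + p))

/-- The restricted product `∗̄` on set compositions:
`P ∗̄ Q = (P₁,…,P_k, p+Q₁,…,p+Q_l)` for `P ∈ Comp_p`. -/
def barMul (P Q : SC) : SC := P ++ shiftSC (maxG P) Q

/-- The order-preserving relabelling map `S → T` (`is_{S,T}`), for finite sets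
of equal cardinality. -/
def relabelFun (S T : Finset ℕ) (x : ℕ) : ℕ := (T.sort (· ≤ ·)).getD (rankIn S x - 1) 0

/-- Relabel a set composition of `S` along the order-preserving bijection `S → T`. -/
def relabelSC (S T : Finset ℕ) (L : SC) : SC := L.map (Finset.image (relabelFun S T))

variable (R : Type) [CommRing R]

/-- The free module with basis indexed by lists of blocks; the twisted descent
algebra `T_•` is its submodule spanned by the set compositions. -/
abbrev FM := SC →₀ R

/-- `T_•` as a submodule: the span of the set compositions. -/
noncomputable def Tspan : Submodule R (FM R) :=
  Submodule.span R {f : FM R | ∃ n P, IsSetComp n P ∧ f = Finsupp.single P 1}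

/-- The restricted product `∗̄` as a bilinear map. -/
noncomputable def barL : FM R →ₗ[R] FM R →ₗ[R] FM R :=
  Finsupp.lift _ R SC fun P => Finsupp.lift _ R SC fun Q => Finsupp.single (barMul P Q) 1

/-- The symmetrized product `∗̂` on basis elements:
`P ∗̂ Q = Σ is_{[p],A}(P) ∗ is_{[q],B}(Q)` over all `A ⊔ B = [p+q]`, `|A| = p`. -/
noncomputable def hatB (P Q : SC) : FM R :=
  ∑ A ∈ (Finset.Icc 1 (maxG P + maxG Q)).powerset.filter (fun A => A.card = maxG P),
    Finsupp.single
      (relabelSC (Finset.Icc 1 (maxG P)) A P ++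
        relabelSC (Finset.Icc 1 (maxG Q)) ((Finset.Icc 1 (maxG P + maxG Q)) \ A) Q) 1

/-- The symmetrized product `∗̂` as a bilinear map. -/
noncomputable def hatL : FM R →ₗ[R] FM R →ₗ[R] FM R :=
  Finsupp.lift _ R SC fun P => Finsupp.lift _ R SC fun Q => hatB R P Q

/-- `T_• ⊗ T_•`, realized as the free module on pairs of basis elements. -/
abbrev FM2 := (SC × SC) →₀ R

/-- `T_• ⊗ T_• ⊗ T_•`, realized as the free module on triples of basis elements. -/
abbrev FM3 := (SC × SC × SC) →₀ R

/-- The restricted coproduct `δ̄ (P) = Σ_{p=0}^n P|_{[p]} ⊗ P|_{{p+1,…,n}}`. -/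
noncomputable def dBarL : FM R →ₗ[R] FM2 R :=
  Finsupp.lift _ R SC fun P =>
    ∑ p ∈ Finset.range (maxG P + 1),
      Finsupp.single
        (restrictSC (Finset.Icc 1 p) P, restrictSC (Finset.Icc (p+1) (maxG P)) P) 1

/-- The cosymmetrized coproduct `δ̂ (P) = Σ_{A ⊔ B = [n]} P|_A ⊗ P|_B`. -/
noncomputable def dHatL : FM R →ₗ[R] FM2 R :=
  Finsupp.lift _ R SC fun P =>
    ∑ A ∈ (Finset.Icc 1 (maxG P)).powerset,
      Finsupp.single (restrictSC A P, restrictSC ((Finset.Icc 1 (maxG P)) \ A) P) 1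

/-- Apply a coproduct to the first tensor factor:  `d ⊗ id : T⊗T → T⊗T⊗T`. -/
noncomputable def applyFst (d : FM R →ₗ[R] FM2 R) : FM2 R →ₗ[R] FM3 R :=
  Finsupp.lift _ R (SC × SC) fun PQ =>
    Finsupp.mapDomain (fun RS : SC × SC => (RS.1, RS.2, PQ.2)) (d (Finsupp.single PQ.1 1))

/-- Apply a coproduct to the second tensor factor:  `id ⊗ d : T⊗T → T⊗T⊗T`. -/
noncomputable def applySnd (d : FM R →ₗ[R] FM2 R) : FM2 R →ₗ[R] FM3 R :=
  Finsupp.lift _ R (SC × SC) fun PQ =>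
    Finsupp.mapDomain (fun RS : SC × SC => (PQ.1, RS.1, RS.2)) (d (Finsupp.single PQ.2 1))

/-- `ε ⊗ id : T⊗T → T`, where `ε` is the projection onto `T_0 ≅ R`
(the coefficient of the empty set composition). -/
noncomputable def epsFst : FM2 R →ₗ[R] FM R :=
  Finsupp.lift _ R (SC × SC) fun PQ =>
    if PQ.1 = ([] : SC) then Finsupp.single PQ.2 1 else 0

/-- `id ⊗ ε : T⊗T → T`. -/
noncomputable def epsSnd : FM2 R →ₗ[R] FM R :=
  Finsupp.lift _ R (SC × SC) fun PQ =>
    if PQ.2 = ([] : SC) then Finsupp.single PQ.1 1 else 0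

/-- The twist map `x ⊗ y ↦ y ⊗ x` on `T_• ⊗ T_•`. -/
noncomputable def twistL : FM2 R →ₗ[R] FM2 R :=
  Finsupp.lift _ R (SC × SC) fun PQ => Finsupp.single (PQ.2, PQ.1) 1

/-- The counit: projection onto the degree-0 component `T_0 ≅ R`. -/
noncomputable def counitL : FM R →ₗ[R] R :=
  Finsupp.lift _ R SC fun P => if P = ([] : SC) then 1 else 0

/-- `L` is a set composition of the finite set `A`. -/
def IsSetCompOf (A : Finset ℕ) (L : SC) : Prop :=
  (∀ B ∈ L, B.Nonempty) ∧ L.Pairwise Disjoint ∧ ground L = A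

/-- The word over the alphabet `ℕ̄ = ℕ ∪ {,}` (with the comma encoded as `⊥`)
associated with a set composition: each block is written as the increasing
sequence of its elements and consecutive blocks are separated by a comma. -/
def wordOf (L : SC) : List (WithBot ℕ) :=
  List.intercalate [(⊥ : WithBot ℕ)]
    (L.map fun B => (B.sort (· ≤ ·)).map (fun x => (x : WithBot ℕ)))

/-- The strict total order `≪` on set compositions: compare first the sizes of
the ground sets, then the associated words lexicographically (`, < 1 < 2 < ⋯`). -/
def llOrd (P Q : SC) : Prop :=
  (ground P).card < (ground Q).card ∨
    ((ground P).card = (ground Q).card ∧ List.Lex (· < ·) (wordOf P) (wordOf Q))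


/-!
Expand `P ∗̂ Q` as the sum over `p`-subsets `A ⊆ [p+q]` of `is_{[p],A}(P) ∗ is_{[q],[p+q]∖A}(Q)`.
The summand for `A = [p]` is `P ∗̄ Q`. For any other `A`, the order-preserving bijection
`g : [p] → A` satisfies `x ≤ g x` for all `x`, with strict inequality for some `x`. The word of
the summand begins with the word of `P` with `g` applied letterwise, while the word of `P ∗̄ Q`
begins with the word of `P` itself; both have the same length, so `P ∗̄ Q` comes first
lexicographically.
-/

lemma ground_cons (B : Finset ℕ) (L : SC) : ground (B :: L) = B ∪ ground L := rfl

lemma mem_ground {L : SC} {x : ℕ} : x ∈ ground L ↔ ∃ B ∈ L, x ∈ B := by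
  induction L with
  | nil => simp [ground]
  | cons B L ih => simp [ground, ← ih]

lemma subset_ground {L : SC} {B : Finset ℕ} (hB : B ∈ L) : B ⊆ ground L :=
  fun _ hx => mem_ground.2 ⟨B, hB, hx⟩

lemma ground_append (L₁ L₂ : SC) : ground (L₁ ++ L₂) = ground L₁ ∪ ground L₂ := by
  induction L₁ with
  | nil => simp [ground]
  | cons B L₁ ih => simp only [ground, List.cons_append, List.foldr_cons] at ih ⊢; rw [ih, union_assoc]

lemma ground_map_image (g : ℕ → ℕ) (L : SC) :
    ground (L.map (image g)) = (ground L).image g := by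
  induction L with
  | nil => simp [ground]
  | cons B L ih => simp only [ground, List.map_cons, List.foldr_cons] at ih ⊢; rw [ih, image_union]

lemma maxG_of_ground_eq_Icc {n : ℕ} {L : SC} (hL : ground L = Icc 1 n) : maxG L = n := by
  rcases Nat.eq_zero_or_pos n with rfl | hn
  · simp [maxG, hL]
  · exact le_antisymm (Finset.sup_le fun x hx => (mem_Icc.1 (hL ▸ hx)).2)
      (Finset.le_sup (f := id) (hL ▸ mem_Icc.2 ⟨hn, le_rfl⟩))

lemma rankIn_Icc {p x : ℕ} (hx : x ∈ Icc 1 p) : rankIn (Icc 1 p) x = x := by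
  rw [mem_Icc] at hx
  rw [rankIn, show (Icc 1 p).filter (· ≤ x) = Icc 1 x by ext y; simp; omega, Nat.card_Icc]
  omega

section Relabel

variable {p : ℕ} {T : Finset ℕ}

lemma relabelFun_Icc_eq_orderEmbOfFin (hc : T.card = p) {x : ℕ} (hx : x ∈ Icc 1 p) :
    relabelFun (Icc 1 p) T x = T.orderEmbOfFin hc ⟨x - 1, by rw [mem_Icc] at hx; omega⟩ := by
  rw [mem_Icc] at hx
  rw [relabelFun, rankIn_Icc (mem_Icc.2 hx), List.getD_eq_getElem _ _ (by rw [length_sort]; omega)]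
  rfl

lemma relabelFun_mem (hc : T.card = p) {x : ℕ} (hx : x ∈ Icc 1 p) :
    relabelFun (Icc 1 p) T x ∈ T := by
  rw [relabelFun_Icc_eq_orderEmbOfFin hc hx]
  exact orderEmbOfFin_mem T hc _

lemma strictMonoOn_relabelFun (hc : T.card = p) :
    StrictMonoOn (relabelFun (Icc 1 p) T) (Icc 1 p : Finset ℕ) := by
  intro x hx y hy hxy
  rw [relabelFun_Icc_eq_orderEmbOfFin hc hx, relabelFun_Icc_eq_orderEmbOfFin hc hy,
    OrderEmbedding.lt_iff_lt, Fin.mk_lt_mk]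
  rw [coe_Icc, Set.mem_Icc] at hx
  omega

lemma image_relabelFun_Icc (hc : T.card = p) : (Icc 1 p).image (relabelFun (Icc 1 p) T) = T := by
  refine eq_of_subset_of_card_le (image_subset_iff.2 fun x hx => relabelFun_mem hc hx) ?_
  rw [card_image_of_injOn (strictMonoOn_relabelFun hc).injOn, hc, Nat.card_Icc]
  omega

lemma le_relabelFun (h0 : 0 ∉ T) (hc : T.card = p) {x : ℕ} (hx : x ∈ Icc 1 p) :
    x ≤ relabelFun (Icc 1 p) T x := by
  set g := relabelFun (Icc 1 p) T
  -- `g 1, …, g x` are `x` distinct elements of `[1, g x]`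
  have hsub : Icc 1 x ⊆ Icc 1 p := Icc_subset_Icc_right (mem_Icc.1 hx).2
  have hmaps : (Icc 1 x).image g ⊆ Icc 1 (g x) := by
    refine image_subset_iff.2 fun y hy => mem_Icc.2 ⟨?_, ?_⟩
    · exact Nat.one_le_iff_ne_zero.2 fun h => h0 (h ▸ relabelFun_mem hc (hsub hy))
    · exact (strictMonoOn_relabelFun hc).monotoneOn (hsub hy) hx (mem_Icc.1 hy).2
  have hcard := card_le_card hmaps
  rwa [card_image_of_injOn ((strictMonoOn_relabelFun hc).injOn.mono (coe_subset.2 hsub)),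
    Nat.card_Icc, Nat.card_Icc, Nat.add_sub_cancel, Nat.add_sub_cancel] at hcard

lemma relabelFun_Icc_Icc (a : ℕ) {x : ℕ} (hx : x ∈ Icc 1 p) :
    relabelFun (Icc 1 p) (Icc (a + 1) (a + p)) x = x + a := by
  have hc : (Icc (a + 1) (a + p)).card = p := by simp
  have hf := orderEmbOfFin_unique hc (f := fun i : Fin p => (i : ℕ) + 1 + a)
    (fun i => by simp only [mem_Icc]; omega) (fun i j hij => by simp only; omega)
  rw [relabelFun_Icc_eq_orderEmbOfFin hc hx, ← hf]
  rw [mem_Icc] at hx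
  simp only
  omega

end Relabel

lemma isSetComp_iff_isSetCompOf {n : ℕ} {L : SC} : IsSetComp n L ↔ IsSetCompOf (Icc 1 n) L :=
  Iff.rfl

lemma IsSetCompOf.append {A B : Finset ℕ} {L₁ L₂ : SC} (h₁ : IsSetCompOf A L₁)
    (h₂ : IsSetCompOf B L₂) (hAB : Disjoint A B) : IsSetCompOf (A ∪ B) (L₁ ++ L₂) := by
  obtain ⟨hne₁, hdis₁, hgr₁⟩ := h₁
  obtain ⟨hne₂, hdis₂, hgr₂⟩ := h₂
  refine ⟨fun C hC => (List.mem_append.1 hC).elim (hne₁ C) (hne₂ C), ?_, ?_⟩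
  · refine List.pairwise_append.2 ⟨hdis₁, hdis₂, fun C hC D hD => ?_⟩
    exact hAB.mono (hgr₁ ▸ subset_ground hC) (hgr₂ ▸ subset_ground hD)
  · rw [ground_append, hgr₁, hgr₂]

lemma IsSetComp.relabelSC {p : ℕ} {P : SC} (hP : IsSetComp p P) {T : Finset ℕ}
    (hc : T.card = p) : IsSetCompOf T (relabelSC (Icc 1 p) T P) := by
  obtain ⟨hne, hdis, hgr⟩ := hP
  have hinj := (strictMonoOn_relabelFun hc).injOn
  refine ⟨fun B hB => ?_, ?_, ?_⟩
  · obtain ⟨C, hC, rfl⟩ := List.mem_map.1 hB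
    exact (hne C hC).image _
  · refine List.pairwise_map.2 (hdis.imp_of_mem fun hB hC hBC => ?_)
    rw [← disjoint_coe, coe_image, coe_image]
    exact (disjoint_coe.2 hBC).image hinj (coe_subset.2 (hgr ▸ subset_ground hB))
      (coe_subset.2 (hgr ▸ subset_ground hC))
  · rw [_root_.relabelSC, ground_map_image, hgr, image_relabelFun_Icc hc]

lemma relabelSC_Icc_Icc {p : ℕ} {P : SC} (hP : IsSetComp p P) (a : ℕ) :
    relabelSC (Icc 1 p) (Icc (a + 1) (a + p)) P = shiftSC a P :=
  List.map_congr_left fun _ hB => image_congr fun _ hx =>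
    relabelFun_Icc_Icc a (hP.2.2 ▸ subset_ground hB hx)

section Words

/-- `wordOf` elaborates its letters as `Nat.cast` inside a list-monad coercion; this is the
plain form. -/
lemma wordOf_eq (L : SC) :
    wordOf L = List.intercalate [⊥] (L.map fun B => (B.sort (· ≤ ·)).map WithBot.some) := by
  simp only [wordOf, List.map_id_fun', id]
  congr 2
  funext B
  exact List.flatMap_pure_eq_map _ _

lemma wordOf_singleton (B : Finset ℕ) : wordOf [B] = (B.sort (· ≤ ·)).map WithBot.some := by
  simp only [wordOf_eq, List.map_cons, List.map_nil, List.intercalate_singleton]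

lemma wordOf_cons_cons (B C : Finset ℕ) (L : SC) :
    wordOf (B :: C :: L) = (B.sort (· ≤ ·)).map WithBot.some ++ ⊥ :: wordOf (C :: L) := by
  simp only [wordOf_eq, List.map_cons, List.intercalate_cons_cons, List.append_assoc,
    List.singleton_append]

lemma wordOf_prefix_append (L₁ L₂ : SC) : wordOf L₁ <+: wordOf (L₁ ++ L₂) := by
  induction L₁ with
  | nil => exact List.nil_prefix
  | cons B L₁ ih =>
    rcases L₁ with _ | ⟨C, L₁⟩
    · rcases L₂ with _ | ⟨C, L₂⟩
      · exact List.prefix_rfl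
      · rw [wordOf_singleton, List.singleton_append, wordOf_cons_cons]
        exact List.prefix_append _ _
    · rw [List.cons_append, List.cons_append, wordOf_cons_cons, wordOf_cons_cons]
      exact (List.prefix_append_right_inj _).2 ((List.prefix_cons_inj _).2 ih)

lemma coe_mem_wordOf_iff {L : SC} {x : ℕ} : WithBot.some x ∈ wordOf L ↔ x ∈ ground L := by
  induction L with
  | nil => simp [wordOf_eq, ground]
  | cons B L ih =>
    rcases L with _ | ⟨C, L⟩
    · simp [wordOf_singleton, ground]
    · rw [wordOf_cons_cons, List.mem_append, List.mem_cons, ih, ground_cons B, mem_union]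
      simp

lemma sort_image_of_strictMonoOn {B : Finset ℕ} {g : ℕ → ℕ} (hg : StrictMonoOn g (B : Set ℕ)) :
    (B.image g).sort (· ≤ ·) = (B.sort (· ≤ ·)).map g := by
  rw [sort, image_val_of_injOn hg.injOn, sort]
  exact (Multiset.map_sort g _ _ _ fun a ha b hb => (hg.le_iff_le ha hb).symm).symm

lemma wordOf_map_image {L : SC} {g : ℕ → ℕ} (hg : StrictMonoOn g (ground L : Set ℕ)) :
    wordOf (L.map (image g)) = (wordOf L).map (WithBot.map g) := by
  induction L with
  | nil => rfl
  | cons B L ih =>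
    rw [ground_cons, coe_union] at hg
    have hB : (B.image g).sort (· ≤ ·) = (B.sort (· ≤ ·)).map g :=
      sort_image_of_strictMonoOn (hg.mono Set.subset_union_left)
    rcases L with _ | ⟨C, L⟩
    · simp only [List.map_cons, List.map_nil, wordOf_singleton, hB, List.map_map]
      rfl
    · rw [List.map_cons, List.map_cons, wordOf_cons_cons, ← List.map_cons, wordOf_cons_cons,
        ih (hg.mono Set.subset_union_right), hB, List.map_append, List.map_cons, List.map_map,
        List.map_map]
      rfl

end Words

lemma List.lex_map_of_forall_le_of_exists_lt {α : Type*} [PartialOrder α] {w : List α} {F : α → α}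
    (hle : ∀ z ∈ w, z ≤ F z) (hlt : ∃ z ∈ w, z < F z) : List.Lex (· < ·) w (w.map F) := by
  induction w with
  | nil => simp at hlt
  | cons a w ih =>
    rcases (hle a List.mem_cons_self).lt_or_eq with ha | ha
    · exact List.Lex.rel ha
    · rw [List.map_cons, ← ha]
      refine List.Lex.cons (ih (fun z hz => hle z (List.mem_cons_of_mem _ hz)) ?_)
      obtain ⟨z, hz, hzF⟩ := hlt
      rcases List.mem_cons.1 hz with rfl | hz
      · exact absurd ha hzF.ne
      · exact ⟨z, hz, hzF⟩

lemma List.Lex.of_isPrefix {α : Type*} {r : α → α → Prop} {u v u' v' : List α}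
    (h : List.Lex r u v) (hlen : u.length = v.length) (hu : u <+: u') (hv : v <+: v') :
    List.Lex r u' v' := by
  obtain ⟨s, rfl⟩ := hu
  obtain ⟨t, rfl⟩ := hv
  induction h with
  | nil => simp at hlen
  | cons _ ih => exact List.Lex.cons (ih (by simpa using hlen))
  | rel hab => exact List.Lex.rel hab

/-- The summand `is_{[p],A}(P) ∗ is_{[q],[p+q]∖A}(Q)` of `P ∗̂ Q`. -/
def hatTerm (p q : ℕ) (P Q : SC) (A : Finset ℕ) : SC :=
  relabelSC (Icc 1 p) A P ++ relabelSC (Icc 1 q) (Icc 1 (p + q) \ A) Q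

section HatTerm

variable {p q : ℕ} {P Q : SC}

lemma hatL_single_single (hP : IsSetComp p P) (hQ : IsSetComp q Q) :
    hatL R (Finsupp.single P 1) (Finsupp.single Q 1) =
      ∑ A ∈ (Icc 1 (p + q)).powersetCard p, Finsupp.single (hatTerm p q P Q A) 1 := by
  simp only [hatL, Finsupp.lift_apply, zero_smul, one_smul, Finsupp.sum_single_index]
  rw [hatB, maxG_of_ground_eq_Icc hP.2.2, maxG_of_ground_eq_Icc hQ.2.2, powersetCard_eq_filter]
  rfl

lemma isSetComp_hatTerm (hP : IsSetComp p P) (hQ : IsSetComp q Q) {A : Finset ℕ}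
    (hA : A ∈ (Icc 1 (p + q)).powersetCard p) : IsSetComp (p + q) (hatTerm p q P Q A) := by
  obtain ⟨hsub, hcard⟩ := mem_powersetCard.1 hA
  have hcompl : (Icc 1 (p + q) \ A).card = q := by
    rw [card_sdiff_of_subset hsub, Nat.card_Icc, hcard]
    omega
  rw [isSetComp_iff_isSetCompOf, ← union_sdiff_of_subset hsub]
  exact (hP.relabelSC hcard).append (hQ.relabelSC hcompl) disjoint_sdiff

lemma Icc_one_mem_powersetCard : Icc 1 p ∈ (Icc 1 (p + q)).powersetCard p :=
  mem_powersetCard.2 ⟨Icc_subset_Icc_right (Nat.le_add_right p q), by simp⟩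

lemma hatTerm_Icc (hP : IsSetComp p P) (hQ : IsSetComp q Q) :
    hatTerm p q P Q (Icc 1 p) = barMul P Q := by
  have hshift : Icc 1 (p + q) \ Icc 1 p = Icc (p + 1) (p + q) := by
    ext x
    simp only [mem_sdiff, mem_Icc]
    omega
  have hid : relabelSC (Icc 1 p) (Icc 1 p) P = P := by
    simpa [shiftSC] using (relabelSC_Icc_Icc hP 0).trans (List.map_id'' (fun _ => image_id') P)
  rw [hatTerm, hshift, hid, relabelSC_Icc_Icc hQ p, barMul, maxG_of_ground_eq_Icc hP.2.2]

lemma lex_wordOf_barMul_hatTerm (hP : IsSetComp p P) {A : Finset ℕ}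
    (hA : A ∈ (Icc 1 (p + q)).powersetCard p) (hne : A ≠ Icc 1 p) :
    List.Lex (· < ·) (wordOf (barMul P Q)) (wordOf (hatTerm p q P Q A)) := by
  obtain ⟨hsub, hcard⟩ := mem_powersetCard.1 hA
  set g := relabelFun (Icc 1 p) A
  have h0 : 0 ∉ A := fun h => by simpa using hsub h
  have hgr := hP.2.2
  have hmono : StrictMonoOn g (ground P : Set ℕ) := hgr ▸ strictMonoOn_relabelFun hcard
  have hmoved : ∃ x ∈ Icc 1 p, g x ≠ x := by
    by_contra! hfix
    exact hne (by rw [← image_relabelFun_Icc hcard, image_congr hfix, image_id'])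
  have hword : wordOf (relabelSC (Icc 1 p) A P) = (wordOf P).map (WithBot.map g) :=
    wordOf_map_image hmono
  refine List.Lex.of_isPrefix ?_ (List.length_map _).symm (wordOf_prefix_append _ _)
    (hword ▸ wordOf_prefix_append _ _)
  refine List.lex_map_of_forall_le_of_exists_lt (fun z hz => ?_) ?_
  · rcases z with _ | x
    · exact le_rfl
    · exact WithBot.coe_le_coe.2 (le_relabelFun h0 hcard (hgr ▸ coe_mem_wordOf_iff.1 hz))
  · obtain ⟨x, hx, hgx⟩ := hmoved
    exact ⟨x, coe_mem_wordOf_iff.2 (hgr ▸ hx),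
      WithBot.coe_lt_coe.2 ((le_relabelFun h0 hcard hx).lt_of_ne hgx.symm)⟩

lemma llOrd_barMul_hatTerm (hP : IsSetComp p P) (hQ : IsSetComp q Q) {A : Finset ℕ}
    (hA : A ∈ (Icc 1 (p + q)).powersetCard p) (hne : A ≠ Icc 1 p) :
    llOrd (barMul P Q) (hatTerm p q P Q A) := by
  have hbar := hatTerm_Icc hP hQ ▸ isSetComp_hatTerm hP hQ Icc_one_mem_powersetCard
  refine Or.inr ⟨?_, lex_wordOf_barMul_hatTerm hP hA hne⟩
  rw [hbar.2.2, (isSetComp_hatTerm hP hQ hA).2.2]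

end HatTerm

/-- **Theorem (triangularity).** For all set compositions `P ∈ Comp_p` and
`Q ∈ Comp_q`, the difference `P ∗̂ Q − P ∗̄ Q` is a ℤ-linear combination of set
compositions `U ∈ Comp_{p+q}` with `P ∗̄ Q ≪ U`. -/
theorem hat_bar_triangularity (p q : ℕ) (P Q : SC)
    (hP : IsSetComp p P) (hQ : IsSetComp q Q) :
    hatL ℤ (Finsupp.single P 1) (Finsupp.single Q 1) - Finsupp.single (barMul P Q) 1 ∈
      Submodule.span ℤ
        {f : FM ℤ | ∃ U : SC, IsSetComp (p + q) U ∧ llOrd (barMul P Q) U ∧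
          f = Finsupp.single U 1} := by
  rw [hatL_single_single ℤ hP hQ, ← add_sum_erase _ _ Icc_one_mem_powersetCard, hatTerm_Icc hP hQ,
    add_sub_cancel_left]
  refine Submodule.sum_mem _ fun A hA => Submodule.subset_span ?_
  obtain ⟨hne, hA⟩ := mem_erase.1 hA
  exact ⟨_, isSetComp_hatTerm hP hQ hA, llOrd_barMul_hatTerm hP hQ hA hne, rfl⟩
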